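/- The McLenaghan–Tariq–Tupper metric decomposes through the invariant coframe with constant coefficient matrix 𝐆: for every x ∈ ℝ⁴ and all i, j ∈ {1,2,3,4}, g_{ij}(x) = Σ_{k,l} 𝐆_{kl} ω^k_i(x) ω^l_j(x). -/

import Mathlib

/-- The McLenaghan–Tariq–Tupper metric components `g_{ij}(x)` (indices `0,…,3` for `1,…,4`). -/
noncomputable def mttMetric (k : ℝ) (x : Fin 4 → ℝ) : Matrix (Fin 4) (Fin 4) ℝ :=
  !![1, 1, 0, -k * x 2;
     1, 0, 0, -k * x 2;
     0, 0, -Real.exp (-(k * x 1)), 0;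
     -k * x 2, -k * x 2, 0, k ^ 2 * (x 2) ^ 2 - Real.exp (k * x 1)]
/-- The invariant 1-forms `ω¹,…,ω⁴`; `ω i x j` is the component `ω^i_j(x)`. -/
noncomputable def ω (k : ℝ) (i : Fin 4) (x : Fin 4 → ℝ) : Fin 4 → ℝ :=
  ![![-1, -2, 0, k * x 2],
    ![0, 0, 0, -Real.exp (k * x 1 / 2)],
    ![0, 0, -Real.exp (-(k * x 1) / 2), 0],
    ![0, -1, 0, 0]] i

/-- The constant matrix `𝐆` with nonzero entries `𝐆₁₁ = 1`, `𝐆₁₄ = 𝐆₄₁ = −1`,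
`𝐆₂₂ = −1`, `𝐆₃₃ = −1`. -/
def Gmat : Matrix (Fin 4) (Fin 4) ℝ :=
  !![1, 0, 0, -1;
     0, -1, 0, 0;
     0, 0, -1, 0;
     -1, 0, 0, 0]

open scoped Matrix

noncomputable def coframeMatrix (k : ℝ) (x : Fin 4 → ℝ) : Matrix (Fin 4) (Fin 4) ℝ :=
  Matrix.of fun a i => ω k a x i

theorem Matrix.transpose_mul_mul_apply {m n R : Type*} [Fintype m] [CommSemiring R]
    (W : Matrix m n R) (G : Matrix m m R) (i j : n) :
    (Wᵀ * G * W) i j = ∑ a, ∑ b, G a b * W a i * W b j := by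
  simp only [Matrix.mul_apply, Matrix.transpose_apply, Finset.sum_mul]
  rw [Finset.sum_comm]
  exact Finset.sum_congr rfl fun a _ => Finset.sum_congr rfl fun b _ => by ring

theorem Real.exp_half_sq (t : ℝ) : exp (t / 2) ^ 2 = exp t := by
  rw [sq, ← exp_add, add_halves]

theorem mttMetric_eq_transpose_mul_Gmat_mul (k : ℝ) (x : Fin 4 → ℝ) :
    mttMetric k x = (coframeMatrix k x)ᵀ * Gmat * coframeMatrix k x := by
  -- afterwards every entry is a polynomial identity in `k`, `x 2` and `exp (±(k * x 1) / 2)`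
  rw [mttMetric, ← Real.exp_half_sq (k * x 1), ← Real.exp_half_sq (-(k * x 1))]
  ext i j
  fin_cases i <;> fin_cases j <;>
    simp only [coframeMatrix, ω, Gmat, Matrix.mul_apply, Matrix.transpose_apply, Matrix.of_apply,
      Fin.sum_univ_four, Matrix.cons_val, Fin.reduceFinMk] <;>
    ring

theorem metric_frame_decomposition_general (k : ℝ) (x : Fin 4 → ℝ) (i j : Fin 4) :
    mttMetric k x i j = ∑ a : Fin 4, ∑ b : Fin 4, Gmat a b * ω k a x i * ω k b x j := by
  rw [mttMetric_eq_transpose_mul_Gmat_mul, Matrix.transpose_mul_mul_apply]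
  rfl

/-- The metric decomposes through the invariant coframe:
`g_{ij}(x) = Σ_{k,l} 𝐆_{kl} ω^k_i(x) ω^l_j(x)`. -/
theorem metric_frame_decomposition (k : ℝ) (hk : 0 < k) (x : Fin 4 → ℝ) (i j : Fin 4) :
    mttMetric k x i j = ∑ a : Fin 4, ∑ b : Fin 4, Gmat a b * ω k a x i * ω k b x j :=
  metric_frame_decomposition_general k x i j
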